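/- arXiv:1310.8056 — 6 statements merged into one kernel-verified Lean document; each statement's English description precedes it below -/
import Mathlib

section
/- For every w ∈ ℂ with w ≠ 0, the theta function θ⁰ satisfies the functional equation θ⁰(q·w) = q⁻¹ · w⁻² · θ⁰(w). -/
/-- The theta function `θ⁰(w) = ∑_{n ∈ ℤ} w^{2n} q^{n²}` (principal-branch powers of `q`). -/
noncomputable def theta0 (q w : ℂ) : ℂ :=
  ∑' n : ℤ, w ^ (2 * n) * q ^ ((n : ℂ) ^ 2)

/-! Multiplying `w` by `q` turns the `n`-th term of `θ⁰` into `q⁻¹ w⁻²` times its `(n+1)`-st term,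
since `(n+1)² = n² + 2n + 1`. Reindexing `n ↦ n + 1` and pulling out the constant factor gives the
functional equation. -/

lemma Complex.cpow_add_intCast {x : ℂ} (hx : x ≠ 0) (y : ℂ) (n : ℤ) :
    x ^ (y + n) = x ^ y * x ^ n := by
  rw [Complex.cpow_add _ _ hx, Complex.cpow_intCast]

lemma Complex.cpow_intCast_add_one_sq {x : ℂ} (hx : x ≠ 0) (n : ℤ) :
    x ^ (((n + 1 : ℤ) : ℂ) ^ 2) = x ^ ((n : ℂ) ^ 2) * x ^ (2 * n + 1) := by
  rw [← Complex.cpow_add_intCast hx]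
  push_cast
  ring_nf

lemma theta0_term_mul_left {q w : ℂ} (hq : q ≠ 0) (hw : w ≠ 0) (n : ℤ) :
    (q * w) ^ (2 * n) * q ^ ((n : ℂ) ^ 2)
      = q⁻¹ * w ^ (-2 : ℤ) * (w ^ (2 * (n + 1)) * q ^ (((n + 1 : ℤ) : ℂ) ^ 2)) := by
  rw [Complex.cpow_intCast_add_one_sq hq, mul_zpow, zpow_add₀ hq, zpow_one,
    show 2 * (n + 1) = 2 * n + 2 by ring, zpow_add₀ hw, zpow_neg]
  field_simp

theorem theta0_functional_equation_general (q : ℂ) (hq0 : 0 < ‖q‖)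
    (w : ℂ) (hw : w ≠ 0) :
    theta0 q (q * w) = q⁻¹ * w ^ (-2 : ℤ) * theta0 q w := by
  have hq : q ≠ 0 := norm_pos_iff.mp hq0
  calc theta0 q (q * w)
      = ∑' n : ℤ, q⁻¹ * w ^ (-2 : ℤ) * (w ^ (2 * (n + 1)) * q ^ (((n + 1 : ℤ) : ℂ) ^ 2)) :=
        tsum_congr (theta0_term_mul_left hq hw)
    _ = q⁻¹ * w ^ (-2 : ℤ) * ∑' n : ℤ, w ^ (2 * (n + 1)) * q ^ (((n + 1 : ℤ) : ℂ) ^ 2) :=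
        tsum_mul_left
    _ = q⁻¹ * w ^ (-2 : ℤ) * theta0 q w :=
        congrArg _ ((Equiv.addRight 1).tsum_eq fun n : ℤ => w ^ (2 * n) * q ^ ((n : ℂ) ^ 2))

/-- For `q ∈ ℂ` with `0 < |q| < 1` and every `w ≠ 0`, the theta function `θ⁰`
satisfies the functional equation `θ⁰(q·w) = q⁻¹ · w⁻² · θ⁰(w)`. -/
theorem theta0_functional_equation (q : ℂ) (hq0 : 0 < ‖q‖)
    (hq1 : ‖q‖ < 1) (w : ℂ) (hw : w ≠ 0) :
    theta0 q (q * w) = q⁻¹ * w ^ (-2 : ℤ) * theta0 q w :=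
  theta0_functional_equation_general q hq0 w hw
end

section
/- Let σ⁰, σ¹ ∈ ℂ and define s : ℂ \ {0} → ℂ by s(w) = σ⁰ θ⁰(w) + σ¹ θ¹(w). For every x ∈ ℝ and every M ∈ ℂ with M ≠ 0 (with q^x := exp(x · Log q)): if s(−q^x M) = 0 then s(−q^{−x} M⁻¹) = 0. -/
/-- The theta function `θ¹(w) = ∑_{n ∈ ℤ} w^{2n+1} q^{(n+1/2)²}` (principal-branch powers of `q`). -/
noncomputable def theta1 (q w : ℂ) : ℂ :=
  ∑' n : ℤ, w ^ (2 * n + 1) * q ^ (((n : ℂ) + 1 / 2) ^ 2)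

lemma theta0_inv (q w : ℂ) : theta0 q w⁻¹ = theta0 q w := by
  rw [theta0, theta0, ← (Equiv.neg ℤ).tsum_eq]
  refine tsum_congr fun n => ?_
  simp only [Equiv.neg_apply, mul_neg, zpow_neg, inv_zpow, inv_inv, Int.cast_neg, neg_sq]

lemma theta1_inv (q w : ℂ) : theta1 q w⁻¹ = theta1 q w := by
  rw [theta1, theta1, ← ((Equiv.neg ℤ).trans (Equiv.subRight 1)).tsum_eq]
  refine tsum_congr fun n => ?_
  have hw : w⁻¹ ^ (2 * (-n - 1) + 1) = w ^ (2 * n + 1) := by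
    rw [inv_zpow, ← zpow_neg]
    ring_nf
  have hq : (((-n - 1 : ℤ) : ℂ) + 1 / 2) ^ 2 = ((n : ℂ) + 1 / 2) ^ 2 := by
    push_cast
    ring
  simp only [Equiv.trans_apply, Equiv.neg_apply, Equiv.subRight_apply, hw, hq]

lemma neg_cpow_neg_mul_inv (q a M : ℂ) : -(q ^ (-a) * M⁻¹) = (-(q ^ a * M))⁻¹ := by
  rw [Complex.cpow_neg, ← mul_inv, ← neg_inv]

theorem section_vanishing_at_conjugate_point_general (q : ℂ) (σ0 σ1 : ℂ) (s : ℂ → ℂ)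
    (hs : ∀ w : ℂ, s w = σ0 * theta0 q w + σ1 * theta1 q w)
    (x : ℝ) (M : ℂ)
    (hzero : s (-(q ^ (x : ℂ) * M)) = 0) :
    s (-(q ^ (-(x : ℂ)) * M⁻¹)) = 0 := by
  rw [neg_cpow_neg_mul_inv, hs, theta0_inv, theta1_inv, ← hs, hzero]

/-- For `s = σ⁰θ⁰ + σ¹θ¹`, every `x ∈ ℝ` and every `M ≠ 0` (with
`q^x := exp(x · Log q)`): if `s(−q^x M) = 0` then `s(−q^{−x} M⁻¹) = 0`. -/
theorem section_vanishing_at_conjugate_point (q : ℂ) (hq0 : 0 < ‖q‖)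
    (hq1 : ‖q‖ < 1) (σ0 σ1 : ℂ) (s : ℂ → ℂ)
    (hs : ∀ w : ℂ, s w = σ0 * theta0 q w + σ1 * theta1 q w)
    (x : ℝ) (M : ℂ) (hM : M ≠ 0)
    (hzero : s (-(q ^ (x : ℂ) * M)) = 0) :
    s (-(q ^ (-(x : ℂ)) * M⁻¹)) = 0 :=
  section_vanishing_at_conjugate_point_general q σ0 σ1 s hs x M hzero
end

section
/- The functions θ⁰ and θ¹ are linearly independent over ℂ: if σ⁰, σ¹ ∈ ℂ satisfy σ⁰ θ⁰(w) + σ¹ θ¹(w) = 0 for every w ∈ ℂ with w ≠ 0, then σ⁰ = 0 and σ¹ = 0. -/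
/-!
`θ⁰` is even and `θ¹` is odd in `w`, so a relation `σ⁰θ⁰ + σ¹θ¹ = 0` splits into `σ⁰θ⁰ = 0` and
`σ¹θ¹ = 0`. In the variable `z = w²`, `θ⁰(w)` and `θ¹(w) / (q^{1/4} w)` are Laurent series
`∑ aₙ zⁿ` with `a₀ = 1` converging absolutely on the unit circle. Such a series cannot vanish on
the circle, because `aₖ = (2πi)⁻¹ ∮ z^{-k-1} ∑ aₙ zⁿ dz`.
-/

open Complex Metric Real MeasureTheory

theorem hasSum_circleIntegral_of_summable_bound {E ι : Type*} [NormedAddCommGroup E]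
    [NormedSpace ℂ E] [CompleteSpace E] [Countable ι] {F : ι → ℂ → E} {c : ℂ} {R : ℝ}
    {bound : ι → ℝ} (hF : ∀ i, CircleIntegrable (F i) c R)
    (h_bound : ∀ i, ∀ z ∈ sphere c |R|, ‖F i z‖ ≤ bound i) (h_sum : Summable bound) :
    HasSum (fun i => ∮ z in C(c, R), F i z) (∮ z in C(c, R), ∑' i, F i z) := by
  have hmem : ∀ θ, circleMap c R θ ∈ sphere c |R| := circleMap_mem_sphere' c R
  refine intervalIntegral.hasSum_integral_of_dominated_convergence (fun i _ => |R| * bound i)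
    (fun i => (hF i).out.def'.aestronglyMeasurable) (fun i => ae_of_all _ fun θ _ => ?_)
    (ae_of_all _ fun _ _ => h_sum.mul_left |R|) intervalIntegrable_const
    (ae_of_all _ fun θ _ => ?_)
  · rw [norm_smul, deriv_circleMap, norm_mul, norm_circleMap_zero, norm_I, mul_one]
    exact mul_le_mul_of_nonneg_left (h_bound i _ (hmem θ)) (abs_nonneg R)
  · exact (h_sum.of_norm_bounded fun i => h_bound i _ (hmem θ)).hasSum.const_smul _

theorem eq_zero_of_forall_tsum_mul_zpow_eq_zero {a : ℤ → ℂ} {r : ℝ} (hr : 0 < r)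
    (ha : Summable fun n => ‖a n‖ * r ^ n) (h : ∀ w : ℂ, ‖w‖ = r → ∑' n, a n * w ^ n = 0)
    (k : ℤ) : a k = 0 := by
  have hsphere : ∀ z ∈ sphere (0 : ℂ) r, z ≠ 0 ∧ ‖z‖ = r := fun z hz => by
    rw [mem_sphere_zero_iff_norm] at hz
    exact ⟨norm_pos_iff.mp (hz ▸ hr), hz⟩
  have hterm : ∀ n, (∮ z in C(0, r), a n * z ^ (n - (k + 1))) =
      if n = k then 2 * π * I * a k else 0 := by
    intro n
    rw [circleIntegral.integral_const_mul]
    split_ifs with hn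
    · have := circleIntegral.integral_sub_center_inv 0 hr.ne'
      rw [hn, show k - (k + 1) = -1 by omega]
      simp only [sub_zero, zpow_neg_one] at this ⊢
      rw [this, mul_comm]
    · have := circleIntegral.integral_sub_zpow_of_ne (n := n - (k + 1)) (by omega) 0 0 r
      simp only [sub_zero] at this
      rw [this, mul_zero]
  have hzero : (∮ z in C(0, r), ∑' n, a n * z ^ (n - (k + 1))) = 0 := by
    refine (circleIntegral.integral_congr hr.le fun z hz => ?_).trans
      (by simp [circleIntegral] : (∮ z in C(0, r), (0 : ℂ)) = 0)
    obtain ⟨hz0, hzr⟩ := hsphere z hz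
    simp only [zpow_sub₀ hz0, ← mul_div_assoc, tsum_div_const, h z hzr, zero_div]
  have hsum := hasSum_circleIntegral_of_summable_bound (F := fun n z => a n * z ^ (n - (k + 1)))
    (c := 0) (R := r) (bound := fun n => ‖a n‖ * r ^ n / r ^ (k + 1))
    (fun n => (continuousOn_const.mul (continuousOn_zpow₀ _ |>.mono fun z hz =>
      (hsphere z hz).1)).circleIntegrable hr.le)
    (fun n z hz => ?_) (ha.div_const _)
  · simp only [hterm, hzero] at hsum
    simpa [pi_ne_zero, I_ne_zero] using (hsum.unique (hasSum_ite_eq k _)).symm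
  · rw [abs_of_pos hr] at hz
    rw [norm_mul, norm_zpow, (hsphere z hz).2, zpow_sub₀ hr.ne', mul_div_assoc]

theorem exists_tsum_mul_sq_zpow_ne_zero {a : ℤ → ℂ} (ha : Summable fun n => ‖a n‖) {k : ℤ}
    (hk : a k ≠ 0) : ∃ w ≠ 0, ∑' n, a n * (w ^ 2) ^ n ≠ 0 := by
  by_contra! h
  refine hk (eq_zero_of_forall_tsum_mul_zpow_eq_zero one_pos (by simpa using ha) (fun z hz => ?_) k)
  obtain ⟨w, rfl⟩ := IsAlgClosed.exists_pow_nat_eq z two_pos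
  exact h w (by rintro rfl; simp at hz)

theorem summable_zpow_sq_add_mul {b : ℝ} (hb0 : 0 < b) (hb1 : b < 1) (c : ℤ) :
    Summable fun n : ℤ => b ^ (n ^ 2 + c * n) := by
  have hgeom : Summable fun n : ℤ => b ^ |n| := by
    have h := summable_geometric_of_lt_one hb0.le hb1
    exact .of_nat_of_neg (by simpa using h) (by simpa using h)
  refine hgeom.of_norm_bounded_eventually ?_
  refine Filter.eventually_cofinite.mpr ((Set.finite_Icc (-|c|) |c|).subset fun n hn => ?_)
  simp only [Set.mem_ofPred_eq, not_le, Real.norm_of_nonneg (zpow_pos hb0 _).le] at hn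
  by_contra hout
  have hc : |c| + 1 ≤ |n| := not_le.mp fun h => hout (abs_le.mp (by omega))
  have hexp : |n| ≤ n ^ 2 + c * n := by
    nlinarith [mul_le_mul_of_nonneg_right hc (abs_nonneg n), neg_abs_le (c * n), abs_mul c n,
      sq_abs n]
  exact hn.not_ge (zpow_le_zpow_right_of_le_one₀ hb0 hb1.le hexp)

theorem theta0_neg (q w : ℂ) : theta0 q (-w) = theta0 q w := by
  simp only [theta0, (even_two_mul _).neg_zpow]

theorem theta1_neg (q w : ℂ) : theta1 q (-w) = -theta1 q w := by
  simp only [theta1, (odd_two_mul_add_one _).neg_zpow, neg_mul, tsum_neg]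

theorem theta0_eq_tsum (q w : ℂ) : theta0 q w = ∑' n : ℤ, q ^ (n ^ 2) * (w ^ 2) ^ n := by
  refine tsum_congr fun n => ?_
  rw [mul_comm, zpow_mul, zpow_ofNat, ← cpow_intCast q]
  push_cast
  rfl

theorem theta1_eq_mul_tsum {q w : ℂ} (hq : q ≠ 0) (hw : w ≠ 0) :
    theta1 q w = q ^ (1 / 4 : ℂ) * w * ∑' n : ℤ, q ^ (n ^ 2 + n) * (w ^ 2) ^ n := by
  rw [theta1, ← tsum_mul_left]
  refine tsum_congr fun n => ?_
  have hexp : ((n : ℂ) + 1 / 2) ^ 2 = ((n ^ 2 + n : ℤ) : ℂ) + 1 / 4 := by push_cast; ring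
  rw [hexp, cpow_add _ _ hq, cpow_intCast, zpow_add_one₀ hw, zpow_mul, zpow_ofNat]
  ring

theorem exists_theta0_ne_zero {q : ℂ} (hq0 : q ≠ 0) (hq1 : ‖q‖ < 1) : ∃ w ≠ 0, theta0 q w ≠ 0 := by
  have hsum : Summable fun n : ℤ => ‖q ^ (n ^ 2)‖ := by
    simpa [norm_zpow] using summable_zpow_sq_add_mul (norm_pos_iff.mpr hq0) hq1 0
  obtain ⟨w, hw, hne⟩ := exists_tsum_mul_sq_zpow_ne_zero hsum (k := 0) (by simp)
  exact ⟨w, hw, by rwa [theta0_eq_tsum]⟩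

theorem exists_theta1_ne_zero {q : ℂ} (hq0 : q ≠ 0) (hq1 : ‖q‖ < 1) : ∃ w ≠ 0, theta1 q w ≠ 0 := by
  have hsum : Summable fun n : ℤ => ‖q ^ (n ^ 2 + n)‖ := by
    simpa [norm_zpow] using summable_zpow_sq_add_mul (norm_pos_iff.mpr hq0) hq1 1
  obtain ⟨w, hw, hne⟩ := exists_tsum_mul_sq_zpow_ne_zero hsum (k := 0) (by simp)
  refine ⟨w, hw, ?_⟩
  rw [theta1_eq_mul_tsum hq0 hw]
  exact mul_ne_zero (mul_ne_zero (by simp [cpow_eq_zero_iff, hq0]) hw) hne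

/-- `θ⁰` and `θ¹` are linearly independent over `ℂ`: if
`σ⁰θ⁰(w) + σ¹θ¹(w) = 0` for all `w ≠ 0`, then `σ⁰ = σ¹ = 0`. -/
theorem theta_linearly_independent (q : ℂ) (hq0 : 0 < ‖q‖)
    (hq1 : ‖q‖ < 1) (σ0 σ1 : ℂ)
    (h : ∀ w : ℂ, w ≠ 0 → σ0 * theta0 q w + σ1 * theta1 q w = 0) :
    σ0 = 0 ∧ σ1 = 0 := by
  have hq : q ≠ 0 := norm_pos_iff.mp hq0
  have hsplit : ∀ w ≠ 0, σ0 * theta0 q w = 0 ∧ σ1 * theta1 q w = 0 := fun w hw => by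
    have hneg := h (-w) (neg_ne_zero.mpr hw)
    rw [theta0_neg, theta1_neg] at hneg
    exact ⟨by linear_combination (h w hw + hneg) / 2, by linear_combination (h w hw - hneg) / 2⟩
  obtain ⟨w0, hw0, h0⟩ := exists_theta0_ne_zero hq hq1
  obtain ⟨w1, hw1, h1⟩ := exists_theta1_ne_zero hq hq1
  exact ⟨(mul_eq_zero.mp (hsplit w0 hw0).1).resolve_right h0,
    (mul_eq_zero.mp (hsplit w1 hw1).2).resolve_right h1⟩
end

section
/- The theta functions θ⁰ and θ¹ have no common zero: there is no w ∈ ℂ with w ≠ 0 such that θ⁰(w) = 0 and θ¹(w) = 0. -/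
open Real Complex Filter

noncomputable def Θ₀ (q w : ℂ) : ℂ := ∑' n : ℤ, w ^ (2 * n) * q ^ (n ^ 2)

noncomputable def Θ₁ (q w : ℂ) : ℂ := ∑' n : ℤ, w ^ (2 * n + 1) * q ^ (n ^ 2 + n)

lemma theta0_eq_Θ₀ (q w : ℂ) : theta0 q w = Θ₀ q w := by
  refine tsum_congr fun n ↦ ?_
  rw [show (n : ℂ) ^ 2 = ((n ^ 2 : ℤ) : ℂ) by push_cast; ring, cpow_intCast]

lemma theta1_eq_cpow_mul_Θ₁ {q : ℂ} (hq : q ≠ 0) (w : ℂ) :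
    theta1 q w = q ^ (1 / 4 : ℂ) * Θ₁ q w := by
  rw [theta1, Θ₁, ← tsum_mul_left]
  refine tsum_congr fun n ↦ ?_
  rw [show ((n : ℂ) + 1 / 2) ^ 2 = 1 / 4 + ((n ^ 2 + n : ℤ) : ℂ) by push_cast; ring,
    cpow_add _ _ hq, cpow_intCast]
  ring

lemma norm_pow_lt_one {x : ℂ} (hx : ‖x‖ < 1) {n : ℕ} (hn : n ≠ 0) : ‖x ^ n‖ < 1 := by
  simpa using pow_lt_one₀ (norm_nonneg x) hx hn

section Summability

variable {q w : ℂ}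

lemma summable_norm_zpow_mul_zpow (hq : q ≠ 0) (hq1 : ‖q‖ < 1) (hw : w ≠ 0) (a b : ℤ) :
    Summable fun n : ℤ ↦ ‖w ^ (2 * n + a) * q ^ (n ^ 2 + b * n)‖ := by
  obtain ⟨L, rfl⟩ : ∃ L, cexp L = w := ⟨_, exp_log hw⟩
  obtain ⟨M, rfl⟩ : ∃ M, cexp M = q := ⟨_, exp_log hq⟩
  -- In terms of `q = exp (π i τ)`, the summands are Jacobi theta terms.
  have hτ : 0 < (I * (-M / π)).im := by
    rw [Complex.norm_exp, Real.exp_lt_one_iff] at hq1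
    rw [I_mul_im, div_ofReal_re, neg_re]
    exact div_pos (neg_pos.mpr hq1) pi_pos
  have hterm : ∀ n : ℤ, cexp L ^ (2 * n + a) * cexp M ^ (n ^ 2 + b * n)
      = cexp (a * L) * jacobiTheta₂_term n ((2 * L + b * M) / (2 * π * I)) (I * (-M / π)) := by
    intro n
    simp only [jacobiTheta₂_term, ← Complex.exp_int_mul, ← Complex.exp_add]
    congr 1
    field_simp
    push_cast
    linear_combination (n : ℂ) ^ 2 * M * I_sq
  simp only [hterm]
  exact summable_norm_iff.mpr (((summable_jacobiTheta₂_term_iff _ _).mpr hτ).mul_left _)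

lemma summable_norm_Θ₀_term (hq : q ≠ 0) (hq1 : ‖q‖ < 1) (hw : w ≠ 0) :
    Summable fun n : ℤ ↦ ‖w ^ (2 * n) * q ^ (n ^ 2)‖ := by
  simpa using summable_norm_zpow_mul_zpow hq hq1 hw 0 0

lemma summable_norm_Θ₁_term (hq : q ≠ 0) (hq1 : ‖q‖ < 1) (hw : w ≠ 0) :
    Summable fun n : ℤ ↦ ‖w ^ (2 * n + 1) * q ^ (n ^ 2 + n)‖ := by
  simpa using summable_norm_zpow_mul_zpow hq hq1 hw 1 1

end Summability

lemma tsum_eq_tsum_inl_add_tsum_inr {α β γ E : Type*} [NormedAddCommGroup E] [CompleteSpace E]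
    {f : α → E} (hf : Summable f) (e : β ⊕ γ ≃ α) :
    ∑' a, f a = ∑' b, f (e (.inl b)) + ∑' c, f (e (.inr c)) := by
  rw [← e.tsum_eq]
  exact Summable.tsum_sum (hf.comp_injective (e.injective.comp Sum.inl_injective))
    (hf.comp_injective (e.injective.comp Sum.inr_injective))

def intEvenOddEquiv : ℤ ⊕ ℤ ≃ ℤ where
  toFun := Sum.elim (2 * ·) (2 * · + 1)
  invFun n := if n % 2 = 0 then .inl (n / 2) else .inr (n / 2)
  left_inv := by
    rintro (k | k) <;> dsimp only [Sum.elim_inl, Sum.elim_inr] <;> split_ifs <;> grind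
  right_inv n := by
    dsimp only
    split_ifs <;> grind

def intProdParityEquiv : (ℤ × ℤ) ⊕ (ℤ × ℤ) ≃ ℤ × ℤ where
  toFun := Sum.elim (fun p ↦ (p.1 + p.2, p.1 - p.2)) (fun p ↦ (p.1 + p.2 + 1, p.1 - p.2))
  invFun p := if (p.1 + p.2) % 2 = 0 then .inl ((p.1 + p.2) / 2, (p.1 - p.2) / 2)
    else .inr ((p.1 + p.2) / 2, (p.1 - p.2) / 2)
  left_inv := by
    rintro (⟨t, k⟩ | ⟨t, k⟩) <;> dsimp only [Sum.elim_inl, Sum.elim_inr] <;> split_ifs <;> grind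
  right_inv := by
    rintro ⟨m, n⟩
    dsimp only
    split_ifs <;> grind

lemma tsum_mul_tsum_eq_parity {R : Type*} [NormedRing R] [CompleteSpace R] {f g : ℤ → R}
    (hf : Summable (‖f ·‖)) (hg : Summable (‖g ·‖)) :
    (∑' n, f n) * ∑' n, g n = ∑' p : ℤ × ℤ, f (p.1 + p.2) * g (p.1 - p.2)
      + ∑' p : ℤ × ℤ, f (p.1 + p.2 + 1) * g (p.1 - p.2) := by
  rw [tsum_mul_tsum_of_summable_norm hf hg,
    tsum_eq_tsum_inl_add_tsum_inr (f := fun p : ℤ × ℤ ↦ f p.1 * g p.2)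
      (summable_mul_of_summable_norm hf hg) intProdParityEquiv]
  rfl

section Doubling

variable {q w : ℂ}

theorem Θ₀_sq (hq : q ≠ 0) (hq1 : ‖q‖ < 1) (hw : w ≠ 0) :
    Θ₀ q w ^ 2 = Θ₀ (q ^ 2) (w ^ 2) * Θ₀ (q ^ 2) 1 + q * (Θ₁ (q ^ 2) (w ^ 2) * Θ₁ (q ^ 2) 1) := by
  have hq2 := norm_pow_lt_one hq1 two_ne_zero
  have hq20 := pow_ne_zero 2 hq
  have hw20 := pow_ne_zero 2 hw
  rw [sq, Θ₀, tsum_mul_tsum_eq_parity (summable_norm_Θ₀_term hq hq1 hw)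
      (summable_norm_Θ₀_term hq hq1 hw), Θ₀, Θ₀, Θ₁, Θ₁,
    tsum_mul_tsum_of_summable_norm (summable_norm_Θ₀_term hq20 hq2 hw20)
      (summable_norm_Θ₀_term hq20 hq2 one_ne_zero),
    tsum_mul_tsum_of_summable_norm (summable_norm_Θ₁_term hq20 hq2 hw20)
      (summable_norm_Θ₁_term hq20 hq2 one_ne_zero), ← tsum_mul_left]
  -- With `w = exp L` and `q = exp M` every summand is an exponential, so each termwise identity
  -- is an identity between exponents.
  obtain ⟨L, rfl⟩ : ∃ L, cexp L = w := ⟨_, exp_log hw⟩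
  obtain ⟨M, rfl⟩ : ∃ M, cexp M = q := ⟨_, exp_log hq⟩
  congr 1 <;> refine tsum_congr fun p ↦ ?_ <;>
    simp only [one_zpow, one_mul, ← Complex.exp_nat_mul, ← Complex.exp_int_mul,
      ← Complex.exp_add] <;>
    congr 1 <;> push_cast <;> ring

theorem Θ₁_sq (hq : q ≠ 0) (hq1 : ‖q‖ < 1) (hw : w ≠ 0) :
    Θ₁ q w ^ 2 = Θ₁ (q ^ 2) (w ^ 2) * Θ₀ (q ^ 2) 1 + Θ₀ (q ^ 2) (w ^ 2) * Θ₁ (q ^ 2) 1 := by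
  have hq2 := norm_pow_lt_one hq1 two_ne_zero
  have hq20 := pow_ne_zero 2 hq
  have hw20 := pow_ne_zero 2 hw
  have hshift : Θ₀ (q ^ 2) (w ^ 2)
      = ∑' t : ℤ, (w ^ 2) ^ (2 * (t + 1)) * (q ^ 2) ^ ((t + 1) ^ 2) :=
    ((Equiv.addRight 1).tsum_eq fun t ↦ (w ^ 2) ^ (2 * t) * (q ^ 2) ^ (t ^ 2)).symm
  rw [sq, Θ₁, tsum_mul_tsum_eq_parity (summable_norm_Θ₁_term hq hq1 hw)
      (summable_norm_Θ₁_term hq hq1 hw), hshift, Θ₁, Θ₀, Θ₁,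
    tsum_mul_tsum_of_summable_norm (summable_norm_Θ₁_term hq20 hq2 hw20)
      (summable_norm_Θ₀_term hq20 hq2 one_ne_zero),
    tsum_mul_tsum_of_summable_norm
      ((summable_norm_Θ₀_term hq20 hq2 hw20).comp_injective (add_left_injective 1))
      (summable_norm_Θ₁_term hq20 hq2 one_ne_zero)]
  obtain ⟨L, rfl⟩ : ∃ L, cexp L = w := ⟨_, exp_log hw⟩
  obtain ⟨M, rfl⟩ : ∃ M, cexp M = q := ⟨_, exp_log hq⟩
  congr 1 <;> refine tsum_congr fun p ↦ ?_ <;>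
    simp only [one_zpow, one_mul, ← Complex.exp_nat_mul, ← Complex.exp_int_mul,
      ← Complex.exp_add] <;>
    congr 1 <;> push_cast <;> ring

end Doubling

section Identities

variable {q w : ℂ}

theorem Θ₀_one_eq_Θ₀_add_Θ₁ (hq : q ≠ 0) (hq1 : ‖q‖ < 1) :
    Θ₀ q 1 = Θ₀ (q ^ 4) 1 + q * Θ₁ (q ^ 4) 1 := by
  rw [Θ₀, tsum_eq_tsum_inl_add_tsum_inr (summable_norm_Θ₀_term hq hq1 one_ne_zero).of_norm
    intEvenOddEquiv, Θ₀, Θ₁, ← tsum_mul_left]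
  obtain ⟨M, rfl⟩ : ∃ M, cexp M = q := ⟨_, exp_log hq⟩
  congr 1 <;> refine tsum_congr fun k ↦ ?_ <;>
    simp only [intEvenOddEquiv, Equiv.coe_fn_mk, Sum.elim_inl, Sum.elim_inr, one_zpow, one_mul,
      ← Complex.exp_nat_mul, ← Complex.exp_int_mul, ← Complex.exp_add] <;>
    congr 1 <;> push_cast <;> ring

theorem Θ₀_zpow_mul (hq : q ≠ 0) (hw : w ≠ 0) (m : ℤ) :
    Θ₀ q (q ^ m * w) = q ^ (-m ^ 2) * w ^ (-2 * m) * Θ₀ q w := by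
  rw [Θ₀, Θ₀, ← (Equiv.addRight m).tsum_eq fun n ↦ w ^ (2 * n) * q ^ (n ^ 2), ← tsum_mul_left]
  obtain ⟨L, rfl⟩ : ∃ L, cexp L = w := ⟨_, exp_log hw⟩
  obtain ⟨M, rfl⟩ : ∃ M, cexp M = q := ⟨_, exp_log hq⟩
  refine tsum_congr fun n ↦ ?_
  simp only [Equiv.coe_addRight, ← Complex.exp_add, ← Complex.exp_int_mul]
  congr 1
  push_cast
  ring

theorem Θ₁_zpow_mul (hq : q ≠ 0) (hw : w ≠ 0) (m : ℤ) :
    Θ₁ q (q ^ m * w) = q ^ (-m ^ 2) * w ^ (-2 * m) * Θ₁ q w := by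
  rw [Θ₁, Θ₁, ← (Equiv.addRight m).tsum_eq fun n ↦ w ^ (2 * n + 1) * q ^ (n ^ 2 + n),
    ← tsum_mul_left]
  obtain ⟨L, rfl⟩ : ∃ L, cexp L = w := ⟨_, exp_log hw⟩
  obtain ⟨M, rfl⟩ : ∃ M, cexp M = q := ⟨_, exp_log hq⟩
  refine tsum_congr fun n ↦ ?_
  simp only [Equiv.coe_addRight, ← Complex.exp_add, ← Complex.exp_int_mul]
  congr 1
  push_cast
  ring

theorem Θ₀_add_one_eq_tsum (hq : q ≠ 0) (hq1 : ‖q‖ < 1) (hw : w ≠ 0) :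
    Θ₀ q w + 1 = ∑' n : ℕ, q ^ (n ^ 2) * (w ^ (2 * n) + w⁻¹ ^ (2 * n)) := by
  have h := tsum_nat_add_neg (summable_norm_Θ₀_term hq hq1 hw).of_norm
  simp only [mul_neg, zpow_neg, neg_sq, mul_zero, zpow_zero, ne_eq, OfNat.ofNat_ne_zero,
    not_false_eq_true, zero_pow, mul_one] at h
  rw [Θ₀, ← h]
  refine tsum_congr fun n ↦ ?_
  rw [← inv_zpow]
  norm_cast
  ring

theorem Θ₁_eq_tsum (hq : q ≠ 0) (hq1 : ‖q‖ < 1) (hw : w ≠ 0) :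
    Θ₁ q w = ∑' n : ℕ, q ^ (n ^ 2 + n) * (w ^ (2 * n + 1) + w⁻¹ ^ (2 * n + 1)) := by
  rw [Θ₁, ← tsum_nat_add_neg_add_one (summable_norm_Θ₁_term hq hq1 hw).of_norm]
  refine tsum_congr fun n ↦ ?_
  have h1 : 2 * (-((n : ℤ) + 1)) + 1 = -((2 * n + 1 : ℕ) : ℤ) := by push_cast; ring
  have h2 : (-((n : ℤ) + 1)) ^ 2 + -((n : ℤ) + 1) = ((n ^ 2 + n : ℕ) : ℤ) := by push_cast; ring
  rw [h1, h2, zpow_neg, ← inv_zpow]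
  norm_cast
  ring

end Identities

section Estimates

variable {q w : ℂ} {R : ℝ}

lemma norm_tsum_sub_zero_le {E : Type*} [NormedAddCommGroup E] [CompleteSpace E] {g : ℕ → E}
    {c ρ : ℝ} (hρ0 : 0 ≤ ρ) (hρ1 : ρ < 1)
    (hg : ∀ n, ‖g (n + 1)‖ ≤ c * ρ ^ (n + 1)) : ‖∑' n, g n - g 0‖ ≤ c * ρ / (1 - ρ) := by
  have hgeom : HasSum (fun n : ℕ ↦ c * ρ ^ (n + 1)) (c * ρ / (1 - ρ)) := by
    simpa only [pow_succ', ← mul_assoc, div_eq_mul_inv]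
      using (hasSum_geometric_of_lt_one hρ0 hρ1).mul_left (c * ρ)
  have hsum : Summable fun n ↦ g (n + 1) := hgeom.summable.of_norm_bounded hg
  rw [((summable_nat_add_iff 1).mp hsum).tsum_eq_zero_add, add_sub_cancel_left]
  exact tsum_of_norm_bounded hgeom hg

lemma norm_pow_mul_add_inv_pow_le (hR : ‖w‖ ≤ R) (hR' : ‖w⁻¹‖ ≤ R) (e k : ℕ) :
    ‖q ^ e * (w ^ k + w⁻¹ ^ k)‖ ≤ ‖q‖ ^ e * (2 * R ^ k) := by
  rw [norm_mul, norm_pow, two_mul]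
  gcongr
  refine (norm_add_le _ _).trans (add_le_add ?_ ?_) <;> rw [norm_pow] <;> gcongr

lemma one_le_sq_of_norm_le_of_norm_inv_le (hw : w ≠ 0) (hR : ‖w‖ ≤ R) (hR' : ‖w⁻¹‖ ≤ R) : 1 ≤ R ^ 2 := by
  calc (1 : ℝ) = ‖w‖ * ‖w⁻¹‖ := by rw [← norm_mul, mul_inv_cancel₀ hw, norm_one]
    _ ≤ R ^ 2 := by rw [sq]; exact mul_le_mul hR hR' (norm_nonneg _) ((norm_nonneg _).trans hR)

theorem norm_Θ₀_sub_one_le (hq : q ≠ 0) (hw : w ≠ 0) (hR : ‖w‖ ≤ R) (hR' : ‖w⁻¹‖ ≤ R)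
    (hρ : ‖q‖ * R ^ 2 < 1) : ‖Θ₀ q w - 1‖ ≤ 2 * (‖q‖ * R ^ 2) / (1 - ‖q‖ * R ^ 2) := by
  have hR0 : 0 ≤ R := (norm_nonneg w).trans hR
  have hq1 : ‖q‖ < 1 := by nlinarith [one_le_sq_of_norm_le_of_norm_inv_le hw hR hR', norm_nonneg q]
  have h := norm_tsum_sub_zero_le (g := fun n : ℕ ↦ q ^ (n ^ 2) * (w ^ (2 * n) + w⁻¹ ^ (2 * n)))
    (c := 2) (by positivity) hρ fun n ↦ ?_
  · rw [show Θ₀ q w - 1 = (Θ₀ q w + 1) - (1 + 1) by ring, Θ₀_add_one_eq_tsum hq hq1 hw]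
    simpa using h
  calc _ ≤ ‖q‖ ^ ((n + 1) ^ 2) * (2 * R ^ (2 * (n + 1))) := norm_pow_mul_add_inv_pow_le hR hR' _ _
    _ ≤ ‖q‖ ^ (n + 1) * (2 * R ^ (2 * (n + 1))) := by
      have := pow_le_pow_of_le_one (norm_nonneg q) hq1.le (Nat.le_self_pow two_ne_zero (n + 1))
      exact mul_le_mul_of_nonneg_right this (mul_nonneg zero_le_two (pow_nonneg hR0 _))
    _ = 2 * (‖q‖ * R ^ 2) ^ (n + 1) := by ring

theorem norm_Θ₁_sub_le (hq : q ≠ 0) (hw : w ≠ 0) (hR : ‖w‖ ≤ R) (hR' : ‖w⁻¹‖ ≤ R)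
    (hρ : ‖q‖ ^ 2 * R ^ 2 < 1) :
    ‖Θ₁ q w - (w + w⁻¹)‖ ≤ 2 * R * (‖q‖ ^ 2 * R ^ 2) / (1 - ‖q‖ ^ 2 * R ^ 2) := by
  have hR0 : 0 ≤ R := (norm_nonneg w).trans hR
  have hq1 : ‖q‖ < 1 := by nlinarith [one_le_sq_of_norm_le_of_norm_inv_le hw hR hR', norm_nonneg q]
  have h := norm_tsum_sub_zero_le
    (g := fun n : ℕ ↦ q ^ (n ^ 2 + n) * (w ^ (2 * n + 1) + w⁻¹ ^ (2 * n + 1)))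
    (c := 2 * R) (by positivity) hρ fun n ↦ ?_
  · rw [Θ₁_eq_tsum hq hq1 hw]
    simpa using h
  calc _ ≤ ‖q‖ ^ ((n + 1) ^ 2 + (n + 1)) * (2 * R ^ (2 * (n + 1) + 1)) :=
        norm_pow_mul_add_inv_pow_le hR hR' _ _
    _ ≤ ‖q‖ ^ (2 * (n + 1)) * (2 * R ^ (2 * (n + 1) + 1)) := by
      have := pow_le_pow_of_le_one (norm_nonneg q) hq1.le
        (by nlinarith : 2 * (n + 1) ≤ (n + 1) ^ 2 + (n + 1))
      exact mul_le_mul_of_nonneg_right this (mul_nonneg zero_le_two (pow_nonneg hR0 _))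
    _ = 2 * R * (‖q‖ ^ 2 * R ^ 2) ^ (n + 1) := by ring

end Estimates

lemma norm_le_two_of_norm_add_inv_le_one {w : ℂ} (h : ‖w + w⁻¹‖ ≤ 1) : ‖w‖ ≤ 2 := by
  rcases eq_or_ne w 0 with rfl | hw
  · simp
  have hinv : ‖w‖ * ‖w⁻¹‖ = 1 := by rw [← norm_mul, mul_inv_cancel₀ hw, norm_one]
  have htri : ‖w‖ ≤ ‖w + w⁻¹‖ + ‖w⁻¹‖ := by
    simpa using norm_sub_le (w + w⁻¹) w⁻¹
  nlinarith [norm_nonneg w⁻¹]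

lemma exists_zpow_mul_mem_annulus {q w : ℂ} (hq : q ≠ 0) (hq1 : ‖q‖ < 1) (hw : w ≠ 0) :
    ∃ m : ℤ, √‖q‖ < ‖q ^ m * w‖ ∧ ‖q ^ m * w‖ ≤ (√‖q‖)⁻¹ := by
  have hr : 0 < ‖q‖ := norm_pos_iff.mpr hq
  have ht : 0 < √‖q‖ := Real.sqrt_pos.mpr hr
  obtain ⟨m, hlo, hhi⟩ := exists_mem_Ioc_zpow (div_pos (norm_pos_iff.mpr hw) ht)
    (one_lt_inv₀ hr |>.mpr hq1)
  have ht2 : √‖q‖ ^ 2 = ‖q‖ := Real.sq_sqrt hr.le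
  have hrm : 0 < ‖q‖ ^ m := zpow_pos hr m
  rw [inv_zpow, lt_div_iff₀ ht, inv_mul_lt_iff₀ hrm] at hlo
  rw [inv_zpow, zpow_add_one₀ hr.ne', div_le_iff₀ ht] at hhi
  refine ⟨m, by rwa [norm_mul, norm_zpow], ?_⟩
  calc ‖q ^ m * w‖ ≤ ‖q‖ ^ m * ((‖q‖ ^ m * ‖q‖)⁻¹ * √‖q‖) := by
        rw [norm_mul, norm_zpow]; gcongr
    _ = (√‖q‖)⁻¹ := by
        field_simp
        rw [ht2]

lemma norm_le_two_of_Θ₁_eq_zero {q w : ℂ} (hq : q ≠ 0) (hq16 : ‖q‖ ≤ 1 / 16) (hw : w ≠ 0)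
    (hlo : √‖q‖ < ‖w‖) (hhi : ‖w‖ ≤ (√‖q‖)⁻¹) (h : Θ₁ q w = 0) : ‖w‖ ≤ 2 ∧ ‖w⁻¹‖ ≤ 2 := by
  set t := √‖q‖
  have ht : 0 < t := Real.sqrt_pos.mpr (norm_pos_iff.mpr hq)
  have ht2 : t ^ 2 = ‖q‖ := Real.sq_sqrt (norm_nonneg q)
  have ht4 : t ≤ 1 / 4 := by nlinarith
  have hρ : ‖q‖ ^ 2 * t⁻¹ ^ 2 = t ^ 2 := by rw [← ht2]; field_simp
  have hwinv : ‖w⁻¹‖ ≤ t⁻¹ := by rw [norm_inv]; exact inv_anti₀ ht hlo.le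
  have hbound := norm_Θ₁_sub_le hq hw hhi hwinv (by nlinarith)
  rw [h, zero_sub, norm_neg, hρ] at hbound
  have hsum : ‖w + w⁻¹‖ ≤ 1 := by
    refine hbound.trans ?_
    rw [div_le_one (by nlinarith), mul_assoc, sq, inv_mul_cancel_left₀ ht.ne']
    nlinarith
  exact ⟨norm_le_two_of_norm_add_inv_le_one hsum,
    norm_le_two_of_norm_add_inv_le_one (by rwa [inv_inv, add_comm])⟩

lemma Θ₀_ne_zero_of_norm_le_two {q w : ℂ} (hq : q ≠ 0) (hq16 : ‖q‖ ≤ 1 / 16) (hw : w ≠ 0)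
    (hw2 : ‖w‖ ≤ 2) (hw2' : ‖w⁻¹‖ ≤ 2) : Θ₀ q w ≠ 0 := by
  intro h
  have hbound := norm_Θ₀_sub_one_le hq hw hw2 hw2' (by nlinarith)
  rw [h, zero_sub, norm_neg, norm_one, le_div_iff₀ (by nlinarith)] at hbound
  nlinarith

def IsCommonZero (q w : ℂ) : Prop := Θ₀ q w = 0 ∧ Θ₁ q w = 0

theorem not_isCommonZero_of_norm_le {q w : ℂ} (hq : q ≠ 0) (hq16 : ‖q‖ ≤ 1 / 16) (hw : w ≠ 0) :
    ¬ IsCommonZero q w := by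
  rintro ⟨h0, h1⟩
  obtain ⟨m, hlo, hhi⟩ := exists_zpow_mul_mem_annulus hq (hq16.trans_lt (by norm_num)) hw
  have hv : q ^ m * w ≠ 0 := mul_ne_zero (zpow_ne_zero m hq) hw
  obtain ⟨hv2, hv2'⟩ := norm_le_two_of_Θ₁_eq_zero hq hq16 hv hlo hhi
    (by rw [Θ₁_zpow_mul hq hw, h1, mul_zero])
  exact Θ₀_ne_zero_of_norm_le_two hq hq16 hv hv2 hv2' (by rw [Θ₀_zpow_mul hq hw, h0, mul_zero])

lemma exists_norm_pow_two_pow_le {x : ℂ} (hx : ‖x‖ < 1) {ε : ℝ} (hε : 0 < ε) :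
    ∃ k : ℕ, ‖x ^ 2 ^ k‖ ≤ ε := by
  have hlim : Tendsto (fun k : ℕ ↦ x ^ 2 ^ k) atTop (nhds 0) :=
    (tendsto_pow_atTop_nhds_zero_of_norm_lt_one hx).comp
      (tendsto_pow_atTop_atTop_of_one_lt one_lt_two)
  simpa using (hlim.eventually (Metric.closedBall_mem_nhds 0 hε)).exists

section ThetaConstants

variable {p c : ℂ}

lemma Θ₀_one_sq_eq_of_Θ₀_one_sq_eq (hp : p ≠ 0) (hp1 : ‖p‖ < 1) (hc : c ^ 2 = p)
    (h : Θ₀ p 1 ^ 2 = c * Θ₁ p 1 ^ 2) : Θ₀ (p ^ 2) 1 ^ 2 = p * Θ₁ (p ^ 2) 1 ^ 2 := by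
  have h0 := Θ₀_sq hp hp1 one_ne_zero
  have h1 := Θ₁_sq hp hp1 one_ne_zero
  rw [one_pow] at h0 h1
  have hsq : (Θ₀ (p ^ 2) 1 - c * Θ₁ (p ^ 2) 1) ^ 2 = 0 := by
    linear_combination -h0 + h + c * h1 + Θ₁ (p ^ 2) 1 ^ 2 * hc
  have hlin := sub_eq_zero.mp (pow_eq_zero_iff two_ne_zero |>.mp hsq)
  rw [hlin, ← hc]
  ring

lemma Θ₀_one_sq_ne_mul_Θ₁_one_sq (hp : p ≠ 0) (hp100 : ‖p‖ ≤ 1 / 100) (hc : c ^ 2 = p) :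
    Θ₀ p 1 ^ 2 ≠ c * Θ₁ p 1 ^ 2 := by
  intro h
  have hc10 : ‖c‖ ≤ 1 / 10 := by
    have : ‖c‖ ^ 2 ≤ (1 / 10) ^ 2 := by rw [← norm_pow, hc]; linarith
    exact (pow_le_pow_iff_left₀ (norm_nonneg c) (by norm_num) two_ne_zero).mp this
  have hp0 := norm_nonneg p
  have h0 := norm_Θ₀_sub_one_le hp one_ne_zero (R := 1) (by simp) (by simp) (by linarith)
  have h1 := norm_Θ₁_sub_le hp one_ne_zero (R := 1) (by simp) (by simp) (by nlinarith)
  simp only [one_pow, mul_one, inv_one, one_add_one_eq_two] at h0 h1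
  replace h0 : ‖Θ₀ p 1 - 1‖ ≤ 1 / 10 :=
    h0.trans (by rw [div_le_iff₀ (by linarith)]; linarith)
  replace h1 : ‖Θ₁ p 1 - 2‖ ≤ 1 / 2 :=
    h1.trans (by rw [div_le_iff₀ (by nlinarith)]; nlinarith)
  have h0' : 9 / 10 ≤ ‖Θ₀ p 1‖ := by
    have := norm_sub_norm_le 1 (Θ₀ p 1)
    rw [norm_sub_rev, norm_one] at this
    linarith
  have h1' : ‖Θ₁ p 1‖ ≤ 5 / 2 := by
    have := norm_sub_norm_le (Θ₁ p 1) 2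
    rw [Complex.norm_two] at this
    linarith
  have := congrArg norm h
  rw [norm_pow, norm_mul, norm_pow] at this
  nlinarith [norm_nonneg c, norm_nonneg (Θ₁ p 1)]

theorem Θ₀_one_ne_zero {s : ℂ} (hs : s ≠ 0) (hs1 : ‖s‖ < 1) : Θ₀ s 1 ≠ 0 := by
  intro h
  have hs2 := norm_pow_lt_one hs1 two_ne_zero
  have key : ∀ k : ℕ, ∃ c : ℂ, c ^ 2 = (s ^ 2) ^ 2 ^ k ∧
      Θ₀ ((s ^ 2) ^ 2 ^ k) 1 ^ 2 = c * Θ₁ ((s ^ 2) ^ 2 ^ k) 1 ^ 2 := by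
    intro k
    induction k with
    | zero =>
      refine ⟨-s, by ring, ?_⟩
      have h0 := Θ₀_sq hs hs1 one_ne_zero
      rw [h, one_pow] at h0
      simp only [pow_zero, pow_one]
      linear_combination -h0
    | succ k ih =>
      obtain ⟨c, hc, hk⟩ := ih
      refine ⟨(s ^ 2) ^ 2 ^ k, by ring, ?_⟩
      rw [pow_succ 2 k, pow_mul]
      exact Θ₀_one_sq_eq_of_Θ₀_one_sq_eq (pow_ne_zero _ (pow_ne_zero _ hs))
        (norm_pow_lt_one hs2 (pow_ne_zero k two_ne_zero)) hc hk
  obtain ⟨k, hk⟩ := exists_norm_pow_two_pow_le hs2 (by norm_num : (0 : ℝ) < 1 / 100)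
  obtain ⟨c, hc, hck⟩ := key k
  exact Θ₀_one_sq_ne_mul_Θ₁_one_sq (pow_ne_zero _ (pow_ne_zero _ hs)) hk hc hck

end ThetaConstants

section CommonZeros

variable {q w : ℂ}

theorem IsCommonZero.sq (hq : q ≠ 0) (hq1 : ‖q‖ < 1) (hw : w ≠ 0) (h : IsCommonZero q w) :
    IsCommonZero (q ^ 2) (w ^ 2) := by
  obtain ⟨s, rfl⟩ := IsAlgClosed.exists_pow_nat_eq q two_pos
  have hs : s ≠ 0 := by rintro rfl; simp at hq
  have hs1 : ‖s‖ < 1 := by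
    rw [norm_pow] at hq1
    exact (pow_lt_one_iff_of_nonneg (norm_nonneg s) two_ne_zero).mp hq1
  have h0 := Θ₀_sq hq hq1 hw
  have h1 := Θ₁_sq hq hq1 hw
  rw [h.1] at h0
  rw [h.2] at h1
  have hplus := Θ₀_one_eq_Θ₀_add_Θ₁ hs hs1
  have hminus := Θ₀_one_eq_Θ₀_add_Θ₁ (neg_ne_zero.mpr hs) (by rwa [norm_neg])
  rw [show s ^ 4 = (s ^ 2) ^ 2 by ring] at hplus
  rw [show (-s) ^ 4 = (s ^ 2) ^ 2 by ring] at hminus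
  set A := Θ₀ ((s ^ 2) ^ 2) (w ^ 2)
  set B := Θ₁ ((s ^ 2) ^ 2) (w ^ 2)
  have hApB : (A + s * B) * Θ₀ s 1 = 0 := by
    rw [hplus]; linear_combination -h0 - s * h1
  have hAmB : (A - s * B) * Θ₀ (-s) 1 = 0 := by
    rw [hminus]; linear_combination -h0 + s * h1
  have hApB' := (mul_eq_zero.mp hApB).resolve_right (Θ₀_one_ne_zero hs hs1)
  have hAmB' := (mul_eq_zero.mp hAmB).resolve_right
    (Θ₀_one_ne_zero (neg_ne_zero.mpr hs) (by rwa [norm_neg]))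
  refine ⟨by linear_combination (hApB' + hAmB') / 2, ?_⟩
  exact (mul_eq_zero.mp (by linear_combination (hApB' - hAmB') / 2 : s * B = 0)).resolve_left hs

theorem IsCommonZero.pow_two_pow (hq : q ≠ 0) (hq1 : ‖q‖ < 1) (hw : w ≠ 0)
    (h : IsCommonZero q w) (k : ℕ) : IsCommonZero (q ^ 2 ^ k) (w ^ 2 ^ k) := by
  induction k with
  | zero => simpa using h
  | succ k ih =>
    rw [pow_succ, pow_mul, pow_mul]
    exact ih.sq (pow_ne_zero _ hq) (norm_pow_lt_one hq1 (by positivity)) (pow_ne_zero _ hw)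

end CommonZeros

/-- `θ⁰` and `θ¹` have no common zero: there is no `w ≠ 0` with
`θ⁰(w) = 0` and `θ¹(w) = 0`. -/
theorem theta_no_common_zero (q : ℂ) (hq0 : 0 < ‖q‖)
    (hq1 : ‖q‖ < 1) :
    ¬ ∃ w : ℂ, w ≠ 0 ∧ theta0 q w = 0 ∧ theta1 q w = 0 := by
  rintro ⟨w, hw, h0, h1⟩
  have hq : q ≠ 0 := norm_pos_iff.mp hq0
  have hcpow : q ^ (1 / 4 : ℂ) ≠ 0 := cpow_ne_zero_iff.mpr (Or.inl hq)
  have h : IsCommonZero q w :=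
    ⟨theta0_eq_Θ₀ q w ▸ h0,
      (mul_eq_zero.mp (theta1_eq_cpow_mul_Θ₁ hq w ▸ h1)).resolve_left hcpow⟩
  obtain ⟨k, hk⟩ := exists_norm_pow_two_pow_le hq1 (by norm_num : (0 : ℝ) < 1 / 16)
  exact not_isCommonZero_of_norm_le (pow_ne_zero _ hq) hk (pow_ne_zero _ hw)
    (h.pow_two_pow hq hq1 hw k)
end

section
/- Let w₀ ∈ ℂ with w₀ ≠ 0, and let (σ⁰, σ¹), (τ⁰, τ¹) ∈ ℂ² with (σ⁰, σ¹) ≠ (0, 0). If σ⁰ θ⁰(w₀) + σ¹ θ¹(w₀) = 0 and τ⁰ θ⁰(w₀) + τ¹ θ¹(w₀) = 0, then there exists c ∈ ℂ with (τ⁰, τ¹) = (c·σ⁰, c·σ¹). -/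
open Complex Real

/-- Splits `ℤ × ℤ` according to the parity `b` of `m + n`. -/
def Int.parityEquiv : Bool × ℤ × ℤ ≃ ℤ × ℤ where
  toFun p := (p.2.1 + p.2.2 + p.1.toNat, p.2.1 - p.2.2)
  invFun p := (decide ((p.1 + p.2) % 2 = 1), (p.1 + p.2) / 2, (p.1 - p.2) / 2)
  left_inv := by rintro ⟨_ | _, s, d⟩ <;> simp <;> omega
  right_inv := by rintro ⟨m, n⟩; by_cases h : (m + n) % 2 = 1 <;> simp [h] <;> omega

theorem tsum_mul_tsum_eq_add_of_summable_norm {R : Type*} [NormedRing R] [CompleteSpace R]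
    {f g : ℤ → R} (hf : Summable (‖f ·‖)) (hg : Summable (‖g ·‖)) :
    (∑' m, f m) * (∑' n, g n) = ∑' p : ℤ × ℤ, f (p.1 + p.2) * g (p.1 - p.2)
      + ∑' p : ℤ × ℤ, f (p.1 + p.2 + 1) * g (p.1 - p.2) := by
  have hfg : Summable fun p => f (Int.parityEquiv p).1 * g (Int.parityEquiv p).2 :=
    Int.parityEquiv.summable_iff.2 (summable_mul_of_summable_norm hf hg)
  rw [tsum_mul_tsum_of_summable_norm hf hg, ← Int.parityEquiv.tsum_eq,
    hfg.tsum_prod' hfg.prod_factor, tsum_bool]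
  simp [Int.parityEquiv]

theorem not_of_height_doubling {α : Type*} (h : α → ℝ) {P : α → Prop} (T : ℝ)
    (hlarge : ∀ a, T ≤ h a → ¬ P a) (hstep : ∀ a, 0 < h a → P a → ∃ b, P b ∧ 2 * h a ≤ h b)
    {a : α} (ha : 0 < h a) : ¬ P a := by
  intro hPa
  have hiter : ∀ k : ℕ, ∃ b, P b ∧ 2 ^ k * h a ≤ h b := by
    intro k
    induction k with
    | zero => exact ⟨a, hPa, by simp⟩
    | succ k ih =>
      obtain ⟨b, hPb, hb⟩ := ih
      obtain ⟨c, hPc, hc⟩ := hstep b ((by positivity : (0:ℝ) < 2 ^ k * h a).trans_le hb) hPb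
      exact ⟨c, hPc, by rw [pow_succ]; linarith⟩
  obtain ⟨k, hk⟩ := pow_unbounded_of_one_lt (T / h a) one_lt_two
  obtain ⟨b, hPb, hb⟩ := hiter k
  exact hlarge b (by rw [div_lt_iff₀ ha] at hk; linarith) hPb

theorem exists_eq_mul_of_mul_add_mul_eq_zero {K : Type*} [Field K] {X Y σ0 σ1 τ0 τ1 : K}
    (hXY : (X, Y) ≠ (0, 0)) (hσ : (σ0, σ1) ≠ (0, 0))
    (hσXY : σ0 * X + σ1 * Y = 0) (hτXY : τ0 * X + τ1 * Y = 0) :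
    ∃ c : K, (τ0, τ1) = (c * σ0, c * σ1) := by
  have hdet : σ0 * τ1 - σ1 * τ0 = 0 := by
    by_contra hdet
    refine hXY (Prod.ext ?_ ?_)
    · exact (mul_eq_zero.1 (by linear_combination τ1 * hσXY - σ1 * hτXY :
        (σ0 * τ1 - σ1 * τ0) * X = 0)).resolve_left hdet
    · exact (mul_eq_zero.1 (by linear_combination σ0 * hτXY - τ0 * hσXY :
        (σ0 * τ1 - σ1 * τ0) * Y = 0)).resolve_left hdet
  by_cases hσ0 : σ0 = 0
  · have hσ1 : σ1 ≠ 0 := fun hσ1 => hσ (by rw [hσ0, hσ1])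
    refine ⟨τ1 / σ1, Prod.ext ?_ (div_mul_cancel₀ _ hσ1).symm⟩
    simpa [hσ0, hσ1] using hdet
  · refine ⟨τ0 / σ0, Prod.ext (div_mul_cancel₀ _ hσ0).symm ?_⟩
    field_simp
    linear_combination hdet

theorem summable_norm_jacobiTheta₂_term (z : ℂ) {τ : ℂ} (hτ : 0 < im τ) :
    Summable (‖jacobiTheta₂_term · z τ‖) :=
  ((summable_jacobiTheta₂_term_iff z τ).2 hτ).norm

theorem jacobiTheta₂_mul_jacobiTheta₂ (u v τ : ℂ) :
    jacobiTheta₂ u τ * jacobiTheta₂ v τ =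
      jacobiTheta₂ (u + v) (2 * τ) * jacobiTheta₂ (u - v) (2 * τ) +
        cexp (2 * π * I * u + π * I * τ) *
          (jacobiTheta₂ (u + v + τ) (2 * τ) * jacobiTheta₂ (u - v + τ) (2 * τ)) := by
  rcases le_or_gt (im τ) 0 with hτ | hτ
  · have h2τ : im (2 * τ) ≤ 0 := by simp; linarith
    simp [jacobiTheta₂_undef _ hτ, jacobiTheta₂_undef _ h2τ]
  have h2τ : 0 < im (2 * τ) := by simpa using hτ
  simp only [jacobiTheta₂]
  rw [tsum_mul_tsum_eq_add_of_summable_norm (summable_norm_jacobiTheta₂_term u hτ)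
      (summable_norm_jacobiTheta₂_term v hτ),
    tsum_mul_tsum_of_summable_norm (summable_norm_jacobiTheta₂_term _ h2τ)
      (summable_norm_jacobiTheta₂_term _ h2τ),
    tsum_mul_tsum_of_summable_norm (summable_norm_jacobiTheta₂_term _ h2τ)
      (summable_norm_jacobiTheta₂_term _ h2τ), ← tsum_mul_left]
  congr 1 <;> refine tsum_congr fun p => ?_ <;>
    simp only [jacobiTheta₂_term, ← Complex.exp_add] <;> congr 1 <;> push_cast <;> ring

theorem jacobiTheta₂_sq (z τ : ℂ) :
    jacobiTheta₂ z τ ^ 2 =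
      jacobiTheta₂ (2 * z) (2 * τ) * jacobiTheta₂ 0 (2 * τ) +
        cexp (2 * π * I * z + π * I * τ) *
          (jacobiTheta₂ (2 * z + τ) (2 * τ) * jacobiTheta₂ τ (2 * τ)) := by
  rw [sq, jacobiTheta₂_mul_jacobiTheta₂, sub_self, zero_add, ← two_mul]

theorem jacobiTheta₂_half_add_half (τ : ℂ) : jacobiTheta₂ (1 / 2 + τ / 2) τ = 0 := by
  have hneg : ∀ n : ℤ, jacobiTheta₂_term (-1 - n) (1 / 2 + τ / 2) τ =
      -jacobiTheta₂_term n (1 / 2 + τ / 2) τ := by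
    intro n
    simp only [jacobiTheta₂_term]
    rw [show 2 * π * I * ((-1 - n : ℤ) : ℂ) * (1 / 2 + τ / 2) + π * I * ((-1 - n : ℤ) : ℂ) ^ 2 * τ
        = (2 * π * I * n * (1 / 2 + τ / 2) + π * I * n ^ 2 * τ) + (-n - 1 : ℤ) * (2 * π * I)
          + π * I by push_cast; ring,
      Complex.exp_add, Complex.exp_add, exp_int_mul_two_pi_mul_I, exp_pi_mul_I]
    ring
  have hself : jacobiTheta₂ (1 / 2 + τ / 2) τ = -jacobiTheta₂ (1 / 2 + τ / 2) τ :=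
    calc jacobiTheta₂ (1 / 2 + τ / 2) τ
        = ∑' n : ℤ, jacobiTheta₂_term (-1 - n) (1 / 2 + τ / 2) τ :=
          ((Equiv.subLeft (-1 : ℤ)).tsum_eq _).symm
      _ = ∑' n : ℤ, -jacobiTheta₂_term n (1 / 2 + τ / 2) τ := tsum_congr hneg
      _ = -jacobiTheta₂ (1 / 2 + τ / 2) τ := tsum_neg
  linear_combination hself / 2

theorem jacobiTheta₂_half_mul_jacobiTheta₂_zero (τ : ℂ) :
    jacobiTheta₂ (1 / 2) τ * jacobiTheta₂ 0 τ = jacobiTheta₂ (1 / 2) (2 * τ) ^ 2 := by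
  have h := jacobiTheta₂_half_add_half (2 * τ)
  rw [mul_div_cancel_left₀ _ two_ne_zero] at h
  rw [jacobiTheta₂_mul_jacobiTheta₂, add_zero, sub_zero, h, zero_mul, mul_zero, add_zero, sq]

theorem jacobiTheta₂_half_sq (τ : ℂ) :
    jacobiTheta₂ (1 / 2) τ ^ 2 =
      jacobiTheta₂ 0 (2 * τ) ^ 2 - cexp (π * I * τ) * jacobiTheta₂ τ (2 * τ) ^ 2 := by
  have hexp : cexp (2 * π * I * (1 / 2) + π * I * τ) = -cexp (π * I * τ) := by
    rw [show 2 * π * I * (1 / 2) + π * I * τ = π * I + π * I * τ by ring, Complex.exp_add,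
      exp_pi_mul_I, neg_one_mul]
  rw [jacobiTheta₂_sq, hexp, show 2 * (1 / 2 : ℂ) = 0 + 1 by norm_num, jacobiTheta₂_add_left,
    add_assoc, add_comm 1 τ, ← add_assoc, jacobiTheta₂_add_left, zero_add]
  ring

theorem norm_jacobiTheta₂_sub_one_le {z τ : ℂ} (hτ : 0 < im τ) (hz : |im z| ≤ im τ / 4) :
    ‖jacobiTheta₂ z τ - 1‖ ≤ 2 * rexp (-π * im τ / 2) / (1 - rexp (-π * im τ / 2)) := by
  set r := rexp (-π * im τ / 2)
  have hr1 : r < 1 := Real.exp_lt_one_iff.2 (by have := pi_pos; nlinarith)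
  have hterm : ∀ n : ℤ, ‖jacobiTheta₂_term n z τ‖ ≤ r ^ n.natAbs := by
    intro n
    refine (norm_jacobiTheta₂_term_le hτ hz le_rfl n).trans ?_
    rw [← Real.exp_nat_mul, Real.exp_le_exp, Nat.cast_natAbs, Int.cast_abs]
    have hn : |(n : ℝ)| ≤ n ^ 2 := by exact_mod_cast Int.natAbs_le_self_sq n
    nlinarith [mul_le_mul_of_nonneg_left hn (by positivity : 0 ≤ π * im τ)]
  have hsum : HasSum (fun n : ℕ => jacobiTheta₂_term ((n + 1 : ℕ) : ℤ) z τ +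
      jacobiTheta₂_term (-((n + 1 : ℕ) : ℤ)) z τ) (jacobiTheta₂ z τ - 1) := by
    have h := (hasSum_jacobiTheta₂_term z hτ).nat_add_neg
    have h0 : jacobiTheta₂_term 0 z τ = 1 := by simp [jacobiTheta₂_term]
    rwa [← hasSum_nat_add_iff' 1, Finset.sum_range_one, Nat.cast_zero, neg_zero, h0,
      show jacobiTheta₂ z τ + 1 - (1 + 1) = jacobiTheta₂ z τ - 1 by ring] at h
  rw [← hsum.tsum_eq, div_eq_mul_inv]
  refine tsum_of_norm_bounded ((hasSum_geometric_of_lt_one (by positivity) hr1).mul_left (2 * r))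
    fun n => (norm_add_le _ _).trans ?_
  calc _ ≤ r ^ (n + 1) + r ^ (n + 1) := add_le_add (hterm _) (hterm _)
    _ = 2 * r * r ^ n := by ring

theorem jacobiTheta₂_ne_zero_of_abs_im_le {z τ : ℂ} (hτ : 2 ≤ im τ) (hz : |im z| ≤ im τ / 4) :
    jacobiTheta₂ z τ ≠ 0 := by
  intro h0
  have hbound := norm_jacobiTheta₂_sub_one_le (by linarith) hz
  rw [h0, zero_sub, norm_neg, norm_one] at hbound
  set r := rexp (-π * im τ / 2) with hr
  have hexp : 4 ≤ rexp (π * im τ / 2) := by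
    nlinarith [Real.add_one_le_exp (π * im τ / 2), pi_gt_three]
  have hr4 : r ≤ 1 / 4 := by
    rw [hr, show -π * im τ / 2 = -(π * im τ / 2) by ring, Real.exp_neg]
    exact inv_le_of_inv_le₀ (by norm_num) (by linarith)
  rw [le_div_iff₀ (by linarith)] at hbound
  linarith

theorem jacobiTheta₂_half_ne_zero {τ : ℂ} (hτ : 0 < im τ) : jacobiTheta₂ (1 / 2) τ ≠ 0 :=
  not_of_height_doubling im 2
    (fun τ hτ => jacobiTheta₂_ne_zero_of_abs_im_le hτ (by simp; linarith))
    (fun τ _ h => ⟨2 * τ, by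
      rw [← pow_eq_zero_iff two_ne_zero, ← jacobiTheta₂_half_mul_jacobiTheta₂_zero, h, zero_mul],
      by simp⟩) hτ

/-- In the variable `w = cexp (π * I * z)` these are the common zeros of `θ⁰` and `θ¹`. -/
def jacobiTheta₂PairZeros (τ : ℂ) : Set ℂ :=
  {z | jacobiTheta₂ z τ = 0 ∧ jacobiTheta₂ (z + τ / 2) τ = 0}

theorem add_half_mem_jacobiTheta₂PairZeros_iff {z τ : ℂ} :
    z + τ / 2 ∈ jacobiTheta₂PairZeros τ ↔ z ∈ jacobiTheta₂PairZeros τ := by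
  simp only [jacobiTheta₂PairZeros, Set.mem_ofPred_eq]
  rw [add_assoc, add_halves, jacobiTheta₂_add_left', mul_eq_zero,
    or_iff_right (Complex.exp_ne_zero _), and_comm]

theorem add_int_mul_half_mem_jacobiTheta₂PairZeros_iff {z τ : ℂ} (k : ℤ) :
    z + k * (τ / 2) ∈ jacobiTheta₂PairZeros τ ↔ z ∈ jacobiTheta₂PairZeros τ := by
  induction k using Int.induction_on with
  | zero => simp
  | succ k ih =>
    rw [← ih, ← add_half_mem_jacobiTheta₂PairZeros_iff (z := z + ((k : ℤ) : ℂ) * (τ / 2))]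
    push_cast
    ring_nf
  | pred k ih =>
    rw [← ih, ← add_half_mem_jacobiTheta₂PairZeros_iff (z := z + _)]
    push_cast
    ring_nf

theorem two_mul_mem_jacobiTheta₂PairZeros {z τ : ℂ} (hτ : 0 < im τ)
    (hz : z ∈ jacobiTheta₂PairZeros τ) : 2 * z ∈ jacobiTheta₂PairZeros (2 * τ) := by
  rw [jacobiTheta₂PairZeros, Set.mem_ofPred_eq, mul_div_cancel_left₀ _ two_ne_zero]
  obtain ⟨h0, h1⟩ := hz
  have e0 := jacobiTheta₂_sq z τ
  have e1 := jacobiTheta₂_sq (z + τ / 2) τ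
  rw [h0] at e0
  rw [h1, show 2 * (z + τ / 2) = 2 * z + τ by ring, show 2 * z + τ + τ = 2 * z + 2 * τ by ring,
    jacobiTheta₂_add_left'] at e1
  set c₀ := cexp (2 * π * I * z + π * I * τ)
  set c₁ := cexp (2 * π * I * (z + τ / 2) + π * I * τ) * cexp (-π * I * (2 * τ + 2 * (2 * z)))
  have hc : c₀ * c₁ = cexp (π * I * τ) := by
    simp only [c₀, c₁, ← Complex.exp_add]
    ring_nf
  have hd := jacobiTheta₂_half_sq τ
  have hθ := pow_ne_zero 2 (jacobiTheta₂_half_ne_zero hτ)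
  -- `e0`, `e1` are a linear system in `X`, `Y` with determinant `A² - c₀c₁B² = ϑ(1/2, τ)²`.
  set X := jacobiTheta₂ (2 * z) (2 * τ)
  set Y := jacobiTheta₂ (2 * z + τ) (2 * τ)
  set A := jacobiTheta₂ 0 (2 * τ)
  set B := jacobiTheta₂ τ (2 * τ)
  constructor
  · refine (mul_eq_zero.1 ?_).resolve_left hθ
    linear_combination X * hd - A * e0 + c₀ * B * e1 + B ^ 2 * X * hc
  · refine (mul_eq_zero.1 ?_).resolve_left hθ
    linear_combination Y * hd - A * e1 + c₁ * B * e0 + B ^ 2 * Y * hc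

theorem exists_abs_im_add_int_mul_half_le (z : ℂ) {τ : ℂ} (hτ : 0 < im τ) :
    ∃ k : ℤ, |im (z + k * (τ / 2))| ≤ im τ / 4 := by
  set x := -2 * im z / im τ
  refine ⟨round x, ?_⟩
  have him : im (z + round x * (τ / 2)) = -(im τ / 2) * (x - round x) := by
    simp only [x, add_im, mul_im, intCast_re, intCast_im, div_ofNat_re, div_ofNat_im]
    field_simp
    ring
  rw [him, abs_mul, abs_neg, abs_of_pos (by positivity)]
  nlinarith [abs_sub_round x]

theorem notMem_jacobiTheta₂PairZeros {τ : ℂ} (hτ : 0 < im τ) (z : ℂ) :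
    z ∉ jacobiTheta₂PairZeros τ :=
  not_of_height_doubling (fun p : ℂ × ℂ => im p.2)
    (P := fun p => p.1 ∈ jacobiTheta₂PairZeros p.2) 2
    (fun ⟨z, τ⟩ hτ hz => by
      obtain ⟨k, hk⟩ := exists_abs_im_add_int_mul_half_le z (by linarith : 0 < im τ)
      exact jacobiTheta₂_ne_zero_of_abs_im_le hτ hk
        ((add_int_mul_half_mem_jacobiTheta₂PairZeros_iff k).2 hz).1)
    (fun ⟨z, τ⟩ hτ hz => ⟨(2 * z, 2 * τ), two_mul_mem_jacobiTheta₂PairZeros hτ hz, by simp⟩)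
    (a := (z, τ)) hτ

theorem exists_cexp_pi_mul_I_eq {q : ℂ} (hq : q ≠ 0) : ∃ τ, cexp (π * I * τ) = q :=
  ⟨log q / (π * I), by rw [mul_div_cancel₀ _ (by simp [pi_ne_zero]), exp_log hq]⟩

theorem theta0_cexp (z τ : ℂ) :
    theta0 (cexp (π * I * τ)) (cexp (π * I * z)) = jacobiTheta₂ z τ := by
  refine tsum_congr fun n => ?_
  rw [show (n : ℂ) ^ 2 = ((n ^ 2 : ℤ) : ℂ) by push_cast; ring, cpow_intCast, ← exp_int_mul,
    ← exp_int_mul, ← Complex.exp_add, jacobiTheta₂_term]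
  congr 1
  push_cast
  ring

theorem theta1_cexp (z τ : ℂ) :
    theta1 (cexp (π * I * τ)) (cexp (π * I * z)) =
      cexp (π * I * τ) ^ (1 / 4 : ℂ) * cexp (π * I * z) * jacobiTheta₂ (z + τ / 2) τ := by
  rw [theta1, jacobiTheta₂, ← tsum_mul_left]
  refine tsum_congr fun n => ?_
  have hexp : cexp (π * I * z) ^ (2 * n + 1) * cexp (π * I * τ) ^ (n ^ 2 + n) =
      cexp (π * I * z) * jacobiTheta₂_term n (z + τ / 2) τ := by
    rw [← exp_int_mul, ← exp_int_mul, jacobiTheta₂_term, ← Complex.exp_add, ← Complex.exp_add]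
    congr 1
    push_cast
    ring
  rw [show ((n : ℂ) + 1 / 2) ^ 2 = ((n ^ 2 + n : ℤ) : ℂ) + 1 / 4 by push_cast; ring,
    cpow_add _ _ (Complex.exp_ne_zero _), cpow_intCast]
  linear_combination cexp (π * I * τ) ^ (1 / 4 : ℂ) * hexp

theorem theta0_theta1_not_both_zero {q w : ℂ} (hq0 : 0 < ‖q‖) (hq1 : ‖q‖ < 1) (hw : w ≠ 0) :
    ¬ (theta0 q w = 0 ∧ theta1 q w = 0) := by
  obtain ⟨τ, rfl⟩ := exists_cexp_pi_mul_I_eq (norm_pos_iff.1 hq0)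
  obtain ⟨z, rfl⟩ := exists_cexp_pi_mul_I_eq hw
  have hτ : 0 < im τ := by
    rw [norm_exp] at hq1
    simpa [pi_pos] using hq1
  simpa [jacobiTheta₂PairZeros, theta0_cexp, theta1_cexp, cpow_eq_zero_iff, Complex.exp_ne_zero]
    using notMem_jacobiTheta₂PairZeros hτ z

/-- If two sections `σ⁰θ⁰ + σ¹θ¹` and `τ⁰θ⁰ + τ¹θ¹` with `(σ⁰,σ¹) ≠ (0,0)`
vanish at the same point `w₀ ≠ 0`, then `(τ⁰,τ¹)` is a scalar multiple of `(σ⁰,σ¹)`. -/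
theorem sections_with_common_zero_proportional (q : ℂ) (hq0 : 0 < ‖q‖)
    (hq1 : ‖q‖ < 1) (w₀ : ℂ) (hw₀ : w₀ ≠ 0)
    (σ0 σ1 τ0 τ1 : ℂ) (hσ : (σ0, σ1) ≠ (0, 0))
    (hσzero : σ0 * theta0 q w₀ + σ1 * theta1 q w₀ = 0)
    (hτzero : τ0 * theta0 q w₀ + τ1 * theta1 q w₀ = 0) :
    ∃ c : ℂ, (τ0, τ1) = (c * σ0, c * σ1) :=
  exists_eq_mul_of_mul_add_mul_eq_zero
    (fun h => theta0_theta1_not_both_zero hq0 hq1 hw₀ (Prod.ext_iff.1 h)) hσ hσzero hτzero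
end

section
/- For every (σ⁰, σ¹) ∈ ℂ² with (σ⁰, σ¹) ≠ (0, 0), there exists w ∈ ℂ with w ≠ 0 such that σ⁰ θ⁰(w) + σ¹ θ¹(w) = 0. -/
open Complex
open scoped Real

namespace Complex

variable {X : Type*} [TopologicalSpace X]

theorem exists_continuous_exp_comp_eq [SimplyConnectedSpace X] [LocallyPathConnectedSpace X]
    {f : X → ℂ} (hf : Continuous f) (hf₀ : ∀ x, f x ≠ 0) :
    ∃ h : X → ℂ, Continuous h ∧ ∀ x, cexp (h x) = f x := by
  obtain ⟨h, ⟨-, hh⟩, -⟩ := isCoveringMapOn_exp.existsUnique_continuousMap_lifts ⟨f, hf⟩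
    (exp_log (hf₀ (Classical.arbitrary X))) hf₀
  exact ⟨h, h.continuous, congrFun hh⟩

theorem const_of_exp_comp [PreconnectedSpace X] {ψ : X → ℂ} (hψ : Continuous ψ)
    (h : ∀ x y, cexp (ψ x) = cexp (ψ y)) (x y : X) : ψ x = ψ y :=
  isCoveringMap_exp.const_of_comp hψ (fun x y ↦ Subtype.ext (h x y)) x y

end Complex

theorem exists_zero_of_periodic_of_quasiperiodic {f : ℂ → ℂ} (hf : Continuous f)
    {a b c : ℂ} (u : ℂ) (ha : a ≠ 0) (hc : c ≠ 0) (hper : Function.Periodic f a)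
    (hquasi : ∀ z, f z = u * cexp (c * z) * f (z + b)) : ∃ z, f z = 0 := by
  by_contra! hf₀
  obtain ⟨h, hh, hexp⟩ := exists_continuous_exp_comp_eq hf hf₀
  have hshift_a := const_of_exp_comp (ψ := fun z ↦ h (z + a) - h z) (by fun_prop)
    (fun x y ↦ by simp only [exp_sub, hexp, hper x, hper y, div_self (hf₀ _)]) b 0
  have hshift_b := const_of_exp_comp (ψ := fun z ↦ h z - h (z + b) - c * z) (by fun_prop)
    (fun x y ↦ by
      simp only [exp_sub, hexp]
      rw [hquasi x, hquasi y]
      field_simp [hf₀, exp_ne_zero]) a 0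
  simp only [zero_add, mul_zero, add_comm b a] at hshift_a hshift_b
  exact mul_ne_zero hc ha (by linear_combination -hshift_a - hshift_b)

theorem continuous_jacobiTheta₂_fst {τ : ℂ} (hτ : 0 < τ.im) : Continuous (jacobiTheta₂ · τ) :=
  continuous_iff_continuousAt.mpr fun z ↦ (differentiableAt_jacobiTheta₂_fst z hτ).continuousAt

section Theta

variable {q : ℂ}

theorem theta0_eq_mul_theta0_mul (hq : q ≠ 0) {w : ℂ} (hw : w ≠ 0) :
    theta0 q w = q * w ^ 2 * theta0 q (q * w) := by
  rw [theta0, theta0, ← tsum_mul_left, ← (Equiv.addRight 1).tsum_eq]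
  refine tsum_congr fun n ↦ ?_
  have hexp : ((n + 1 : ℤ) : ℂ) ^ 2 = (n : ℂ) ^ 2 + ((2 * n + 1 : ℤ) : ℂ) := by push_cast; ring
  rw [Equiv.coe_addRight, hexp, cpow_add _ _ hq, cpow_intCast, mul_zpow, mul_add, mul_one,
    zpow_add₀ hw, zpow_add₀ hq, zpow_one, zpow_two, sq]
  ring

theorem theta1_eq_mul_theta1_mul (hq : q ≠ 0) {w : ℂ} (hw : w ≠ 0) :
    theta1 q w = q * w ^ 2 * theta1 q (q * w) := by
  rw [theta1, theta1, ← tsum_mul_left, ← (Equiv.addRight 1).tsum_eq]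
  refine tsum_congr fun n ↦ ?_
  have hexp : ((n + 1 : ℤ) + 1 / 2 : ℂ) ^ 2 = ((n : ℂ) + 1 / 2) ^ 2 + ((2 * n + 2 : ℤ) : ℂ) := by
    push_cast; ring
  rw [Equiv.coe_addRight, hexp, cpow_add _ _ hq, cpow_intCast, mul_zpow,
    show 2 * (n + 1) + 1 = 2 * n + 1 + 2 by ring, show 2 * n + 2 = 2 * n + 1 + 1 by ring,
    zpow_add₀ hw, zpow_add₀ hq, zpow_one, zpow_two, sq]
  ring

theorem theta0_exp_eq_jacobiTheta₂ (hq : q ≠ 0) (z : ℂ) :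
    theta0 q (cexp (π * I * z)) = jacobiTheta₂ z (log q / (π * I)) := by
  refine tsum_congr fun n ↦ ?_
  rw [jacobiTheta₂_term, cpow_def_of_ne_zero hq, ← exp_int_mul, ← Complex.exp_add]
  congr 1
  field_simp
  push_cast
  ring

theorem theta1_exp_eq_jacobiTheta₂ (hq : q ≠ 0) (z : ℂ) :
    theta1 q (cexp (π * I * z)) =
      cexp (π * I * z + log q / 4) * jacobiTheta₂ (z + log q / (2 * π * I)) (log q / (π * I)) := by
  rw [theta1, jacobiTheta₂, ← tsum_mul_left]
  refine tsum_congr fun n ↦ ?_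
  rw [jacobiTheta₂_term, cpow_def_of_ne_zero hq, ← exp_int_mul, ← Complex.exp_add,
    ← Complex.exp_add]
  congr 1
  field_simp
  push_cast
  ring

theorem im_log_div_pi_mul_I_pos (hq0 : 0 < ‖q‖) (hq1 : ‖q‖ < 1) :
    0 < (log q / (π * I)).im := by
  have him : (log q / (π * I)).im = -Real.log ‖q‖ / π := by simp [div_eq_mul_inv, log_re]
  rw [him]
  exact div_pos (neg_pos.mpr (Real.log_neg hq0 hq1)) Real.pi_pos

theorem continuous_theta0_comp_exp (hq0 : 0 < ‖q‖) (hq1 : ‖q‖ < 1) :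
    Continuous fun z ↦ theta0 q (cexp (π * I * z)) := by
  simp_rw [theta0_exp_eq_jacobiTheta₂ (norm_pos_iff.mp hq0)]
  exact continuous_jacobiTheta₂_fst (im_log_div_pi_mul_I_pos hq0 hq1)

theorem continuous_theta1_comp_exp (hq0 : 0 < ‖q‖) (hq1 : ‖q‖ < 1) :
    Continuous fun z ↦ theta1 q (cexp (π * I * z)) := by
  simp_rw [theta1_exp_eq_jacobiTheta₂ (norm_pos_iff.mp hq0)]
  have := continuous_jacobiTheta₂_fst (im_log_div_pi_mul_I_pos hq0 hq1)
  fun_prop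

end Theta

theorem section_has_zero_general (q : ℂ) (hq0 : 0 < ‖q‖) (hq1 : ‖q‖ < 1)
    (σ0 σ1 : ℂ) :
    ∃ w : ℂ, w ≠ 0 ∧ σ0 * theta0 q w + σ1 * theta1 q w = 0 := by
  have hq : q ≠ 0 := norm_pos_iff.mp hq0
  set f : ℂ → ℂ := fun z ↦ σ0 * theta0 q (cexp (π * I * z)) + σ1 * theta1 q (cexp (π * I * z))
  have hf : Continuous f := by
    have := continuous_theta0_comp_exp hq0 hq1
    have := continuous_theta1_comp_exp hq0 hq1
    fun_prop
  have hper : Function.Periodic f 2 := fun z ↦ by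
    simp only [f, mul_add, Complex.exp_add, show (π : ℂ) * I * 2 = 2 * π * I by ring,
      exp_two_pi_mul_I, mul_one]
  have hquasi (z : ℂ) : f z = q * cexp (2 * π * I * z) * f (z + log q / (π * I)) := by
    have hshift : cexp (π * I * (z + log q / (π * I))) = q * cexp (π * I * z) := by
      rw [mul_add, mul_div_cancel₀ _ (by simp [Real.pi_ne_zero]), Complex.exp_add, exp_log hq,
        mul_comm]
    have hsq : cexp (π * I * z) ^ 2 = cexp (2 * π * I * z) := by
      rw [← Complex.exp_nat_mul]; push_cast; ring_nf
    simp only [f, hshift]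
    rw [theta0_eq_mul_theta0_mul hq (exp_ne_zero _), theta1_eq_mul_theta1_mul hq (exp_ne_zero _),
      hsq]
    ring
  obtain ⟨z, hz⟩ := exists_zero_of_periodic_of_quasiperiodic hf q two_ne_zero
    (by simp [Real.pi_ne_zero]) hper hquasi
  exact ⟨_, exp_ne_zero _, hz⟩

/-- Every nonzero section `σ⁰θ⁰ + σ¹θ¹` has a zero: for `(σ⁰,σ¹) ≠ (0,0)`
there exists `w ≠ 0` with `σ⁰θ⁰(w) + σ¹θ¹(w) = 0`. -/
theorem section_has_zero (q : ℂ) (hq0 : 0 < ‖q‖) (hq1 : ‖q‖ < 1)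
    (σ0 σ1 : ℂ) (hσ : (σ0, σ1) ≠ (0, 0)) :
    ∃ w : ℂ, w ≠ 0 ∧ σ0 * theta0 q w + σ1 * theta1 q w = 0 :=
  section_has_zero_general q hq0 hq1 σ0 σ1
end
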